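/- Fix a real constant α. On ℝ⁴ with coordinates (x, y, v, G), define the smooth vector fields X₁ = ∂_x, X₂ = ∂_y, X₃ = x∂_y − y∂_x, X₄ = ∂_v, X₅ = x∂_x + y∂_y + G∂_G, X₆ = e^{v sin α} sin(v cos α) ∂_G, X₇ = e^{v sin α} cos(v cos α) ∂_G. Then their Lie brackets satisfy: [X₁, X₃] = X₂, [X₂, X₃] = −X₁, [X₁, X₅] = X₁, [X₂, X₅] = X₂, [X₄, X₆] = (sin α) X₆ + (cos α) X₇, [X₄, X₇] = (sin α) X₇ − (cos α) X₆, [X₅, X₆] = −X₆, [X₅, X₇] = −X₇, and all other pairwise brackets among X₁, …, X₇ vanish; in particular, the real linear span of X₁, …, X₇ is closed under the Lie bracket of vector fields. -/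

import Mathlib

noncomputable section

/-- ℝ⁴ with coordinates (x, y, v, G) indexed by 0, 1, 2, 3. -/
abbrev R4 : Type := Fin 4 → ℝ

/-- Lie bracket of vector fields on ℝ⁴: [X, Y](p) = DY(p)·X(p) − DX(p)·Y(p). -/
def lieBracket (X Y : R4 → R4) : R4 → R4 := fun p => fderiv ℝ Y p (X p) - fderiv ℝ X p (Y p)

/-- X₁ = ∂_x. -/
def X1 : R4 → R4 := fun _ => (Pi.single 0 1 : R4)
/-- X₂ = ∂_y. -/
def X2 : R4 → R4 := fun _ => (Pi.single 1 1 : R4)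
/-- X₃ = x∂_y − y∂_x. -/
def X3 : R4 → R4 := fun p => p 0 • (Pi.single 1 1 : R4) - p 1 • (Pi.single 0 1 : R4)
/-- X₄ = ∂_v. -/
def X4 : R4 → R4 := fun _ => (Pi.single 2 1 : R4)
/-- X₅ = x∂_x + y∂_y + G∂_G. -/
def X5 : R4 → R4 := fun p =>
  p 0 • (Pi.single 0 1 : R4) + p 1 • (Pi.single 1 1 : R4) + p 3 • (Pi.single 3 1 : R4)
/-- X₆ = e^{v sin α} sin(v cos α) ∂_G. -/
def X6 (α : ℝ) : R4 → R4 := fun p =>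
  (Real.exp (p 2 * Real.sin α) * Real.sin (p 2 * Real.cos α)) • (Pi.single 3 1 : R4)
/-- X₇ = e^{v sin α} cos(v cos α) ∂_G. -/
def X7 (α : ℝ) : R4 → R4 := fun p =>
  (Real.exp (p 2 * Real.sin α) * Real.cos (p 2 * Real.cos α)) • (Pi.single 3 1 : R4)

/-! The fields `X₁, …, X₅` are constant or linear, so their derivatives are read off directly.
For `X₆, X₇` note that `X₇ + i X₆ = e^{λ v} ∂_G` with `λ = sin α + i cos α`; hence
`∂_v X₆ = sin α X₆ + cos α X₇` and `∂_v X₇ = sin α X₇ - cos α X₆`, which are the nonzero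
brackets with `X₄`. Closure of the span follows because the bracket is bilinear on
differentiable fields. -/

open Real Submodule

namespace VectorField

variable {𝕜 : Type*} [NontriviallyNormedField 𝕜] {E : Type*} [NormedAddCommGroup E]
  [NormedSpace 𝕜 E]

theorem differentiable_of_mem_span {s : Set (E → E)} (hs : ∀ V ∈ s, Differentiable 𝕜 V)
    {V : E → E} (hV : V ∈ span 𝕜 s) : Differentiable 𝕜 V := by
  induction hV using span_induction with
  | mem V hV => exact hs V hV
  | zero => exact differentiable_const 0
  | add V V' _ _ hV hV' => exact hV.add hV'
  | smul c V _ hV => exact hV.const_smul c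

theorem lieBracket_mem_span {s : Set (E → E)} (hs : ∀ V ∈ s, Differentiable 𝕜 V)
    (h : ∀ V ∈ s, ∀ W ∈ s, lieBracket 𝕜 V W ∈ span 𝕜 s) {V W : E → E}
    (hV : V ∈ span 𝕜 s) (hW : W ∈ span 𝕜 s) : lieBracket 𝕜 V W ∈ span 𝕜 s := by
  have hdiff {U : E → E} (hU : U ∈ span 𝕜 s) := differentiable_of_mem_span hs hU
  induction hV using span_induction with
  | mem V hV =>
    induction hW using span_induction with
    | mem W hW => exact h V hV W hW
    | zero => simp
    | add W W' hW hW' ihW ihW' =>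
      have : lieBracket 𝕜 V (W + W') = lieBracket 𝕜 V W + lieBracket 𝕜 V W' :=
        funext fun x => lieBracket_add_right (hdiff hW x) (hdiff hW' x)
      exact this ▸ add_mem ihW ihW'
    | smul c W hW ihW =>
      have : lieBracket 𝕜 V (c • W) = c • lieBracket 𝕜 V W :=
        funext fun x => lieBracket_const_smul_right (hdiff hW x)
      exact this ▸ smul_mem _ c ihW
  | zero => simp
  | add V V' hV hV' ihV ihV' =>
    have : lieBracket 𝕜 (V + V') W = lieBracket 𝕜 V W + lieBracket 𝕜 V' W :=
      funext fun x => lieBracket_add_left (hdiff hV x) (hdiff hV' x)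
    exact this ▸ add_mem ihV ihV'
  | smul c V hV ihV =>
    have : lieBracket 𝕜 (c • V) W = c • lieBracket 𝕜 V W :=
      funext fun x => lieBracket_const_smul_left (hdiff hV x)
    exact this ▸ smul_mem _ c ihV

end VectorField

@[simp] lemma lieBracket_self (V : R4 → R4) : lieBracket V V = 0 := VectorField.lieBracket_self

lemma lieBracket_swap (V W : R4 → R4) : lieBracket W V = -lieBracket V W :=
  funext fun _ => VectorField.lieBracket_swap

def rotationXY : R4 →L[ℝ] R4 :=
  (ContinuousLinearMap.proj 0).smulRight (Pi.single 1 1) -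
    (ContinuousLinearMap.proj 1).smulRight (Pi.single 0 1)

def dilationXYG : R4 →L[ℝ] R4 :=
  (ContinuousLinearMap.proj 0).smulRight (Pi.single 0 1) +
    (ContinuousLinearMap.proj 1).smulRight (Pi.single 1 1) +
    (ContinuousLinearMap.proj 3).smulRight (Pi.single 3 1)

lemma X3_eq_rotationXY : X3 = rotationXY := by ext p; simp [X3, rotationXY]

lemma X5_eq_dilationXYG : X5 = dilationXYG := by ext p; simp [X5, dilationXYG]

lemma hasDerivAt_exp_mul_sin (α t : ℝ) :
    HasDerivAt (fun s => exp (s * sin α) * sin (s * cos α))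
      (sin α * (exp (t * sin α) * sin (t * cos α)) +
        cos α * (exp (t * sin α) * cos (t * cos α))) t :=
  ((hasDerivAt_mul_const (sin α)).exp.fun_mul (hasDerivAt_mul_const (cos α)).sin).congr_deriv
    (by ring)

lemma hasDerivAt_exp_mul_cos (α t : ℝ) :
    HasDerivAt (fun s => exp (s * sin α) * cos (s * cos α))
      (sin α * (exp (t * sin α) * cos (t * cos α)) -
        cos α * (exp (t * sin α) * sin (t * cos α))) t :=
  ((hasDerivAt_mul_const (sin α)).exp.fun_mul (hasDerivAt_mul_const (cos α)).cos).congr_deriv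
    (by ring)

lemma hasFDerivAt_X6 (α : ℝ) (p : R4) :
    HasFDerivAt (X6 α)
      ((ContinuousLinearMap.proj 2 : R4 →L[ℝ] ℝ).smulRight (sin α • X6 α p + cos α • X7 α p))
      p := by
  refine (((hasDerivAt_exp_mul_sin α (p 2)).smul_const (Pi.single 3 1 : R4)).hasFDerivAt.comp p
    (ContinuousLinearMap.proj 2 : R4 →L[ℝ] ℝ).hasFDerivAt).congr_fderiv ?_
  ext v : 1
  simp [X6, X7]
  module

lemma hasFDerivAt_X7 (α : ℝ) (p : R4) :
    HasFDerivAt (X7 α)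
      ((ContinuousLinearMap.proj 2 : R4 →L[ℝ] ℝ).smulRight (sin α • X7 α p - cos α • X6 α p))
      p := by
  refine (((hasDerivAt_exp_mul_cos α (p 2)).smul_const (Pi.single 3 1 : R4)).hasFDerivAt.comp p
    (ContinuousLinearMap.proj 2 : R4 →L[ℝ] ℝ).hasFDerivAt).congr_fderiv ?_
  ext v : 1
  simp [X6, X7]
  module

@[simp] lemma fderiv_X1 (p : R4) : fderiv ℝ X1 p = 0 := fderiv_const_apply _

@[simp] lemma fderiv_X2 (p : R4) : fderiv ℝ X2 p = 0 := fderiv_const_apply _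

@[simp] lemma fderiv_X4 (p : R4) : fderiv ℝ X4 p = 0 := fderiv_const_apply _

@[simp] lemma fderiv_X3 (p : R4) : fderiv ℝ X3 p = rotationXY := by
  rw [X3_eq_rotationXY]; exact rotationXY.fderiv

@[simp] lemma fderiv_X5 (p : R4) : fderiv ℝ X5 p = dilationXYG := by
  rw [X5_eq_dilationXYG]; exact dilationXYG.fderiv

@[simp] lemma fderiv_X6_apply (α : ℝ) (p v : R4) :
    fderiv ℝ (X6 α) p v = v 2 • (sin α • X6 α p + cos α • X7 α p) := by
  simp [(hasFDerivAt_X6 α p).fderiv]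

@[simp] lemma fderiv_X7_apply (α : ℝ) (p v : R4) :
    fderiv ℝ (X7 α) p v = v 2 • (sin α • X7 α p - cos α • X6 α p) := by
  simp [(hasFDerivAt_X7 α p).fderiv]

section brackets

variable (α : ℝ)

@[simp] lemma lieBracket_X1_X3 : lieBracket X1 X3 = X2 := by
  ext p : 1; simp [lieBracket, X1, X2, rotationXY]

@[simp] lemma lieBracket_X2_X3 : lieBracket X2 X3 = -X1 := by
  ext p : 1; simp [lieBracket, X1, X2, rotationXY]

@[simp] lemma lieBracket_X1_X5 : lieBracket X1 X5 = X1 := by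
  ext p : 1; simp [lieBracket, X1, dilationXYG]

@[simp] lemma lieBracket_X2_X5 : lieBracket X2 X5 = X2 := by
  ext p : 1; simp [lieBracket, X2, dilationXYG]

@[simp] lemma lieBracket_X4_X6 : lieBracket X4 (X6 α) = sin α • X6 α + cos α • X7 α := by
  ext p : 1; simp [lieBracket, X4]

@[simp] lemma lieBracket_X4_X7 : lieBracket X4 (X7 α) = sin α • X7 α - cos α • X6 α := by
  ext p : 1; simp [lieBracket, X4]

@[simp] lemma lieBracket_X5_X6 : lieBracket X5 (X6 α) = -X6 α := by
  ext p : 1; simp [lieBracket, X5, X6, dilationXYG]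

@[simp] lemma lieBracket_X5_X7 : lieBracket X5 (X7 α) = -X7 α := by
  ext p : 1; simp [lieBracket, X5, X7, dilationXYG]

@[simp] lemma lieBracket_X1_X2 : lieBracket X1 X2 = 0 := by
  ext p : 1; simp [lieBracket]

@[simp] lemma lieBracket_X1_X4 : lieBracket X1 X4 = 0 := by
  ext p : 1; simp [lieBracket]

@[simp] lemma lieBracket_X1_X6 : lieBracket X1 (X6 α) = 0 := by
  ext p : 1; simp [lieBracket, X1]

@[simp] lemma lieBracket_X1_X7 : lieBracket X1 (X7 α) = 0 := by
  ext p : 1; simp [lieBracket, X1]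

@[simp] lemma lieBracket_X2_X4 : lieBracket X2 X4 = 0 := by
  ext p : 1; simp [lieBracket]

@[simp] lemma lieBracket_X2_X6 : lieBracket X2 (X6 α) = 0 := by
  ext p : 1; simp [lieBracket, X2]

@[simp] lemma lieBracket_X2_X7 : lieBracket X2 (X7 α) = 0 := by
  ext p : 1; simp [lieBracket, X2]

@[simp] lemma lieBracket_X3_X4 : lieBracket X3 X4 = 0 := by
  ext p : 1; simp [lieBracket, X4, rotationXY]

@[simp] lemma lieBracket_X3_X5 : lieBracket X3 X5 = 0 := by
  ext p : 1
  simp [lieBracket, X3, X5, rotationXY, dilationXYG]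
  module

@[simp] lemma lieBracket_X3_X6 : lieBracket X3 (X6 α) = 0 := by
  ext p : 1; simp [lieBracket, X3, X6, rotationXY]

@[simp] lemma lieBracket_X3_X7 : lieBracket X3 (X7 α) = 0 := by
  ext p : 1; simp [lieBracket, X3, X7, rotationXY]

@[simp] lemma lieBracket_X4_X5 : lieBracket X4 X5 = 0 := by
  ext p : 1; simp [lieBracket, X4, dilationXYG]

@[simp] lemma lieBracket_X6_X7 : lieBracket (X6 α) (X7 α) = 0 := by
  ext p : 1; simp [lieBracket, X6, X7]

end brackets

def symmetryGenerators (α : ℝ) : Set (R4 → R4) := {X1, X2, X3, X4, X5, X6 α, X7 α}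

lemma differentiable_of_mem_symmetryGenerators (α : ℝ) :
    ∀ V ∈ symmetryGenerators α, Differentiable ℝ V := by
  simp only [symmetryGenerators, Set.mem_insert_iff, Set.mem_singleton_iff]
  rintro V (rfl | rfl | rfl | rfl | rfl | rfl | rfl)
  · exact differentiable_const _
  · exact differentiable_const _
  · exact X3_eq_rotationXY ▸ rotationXY.differentiable
  · exact differentiable_const _
  · exact X5_eq_dilationXYG ▸ dilationXYG.differentiable
  · exact fun p => (hasFDerivAt_X6 α p).differentiableAt
  · exact fun p => (hasFDerivAt_X7 α p).differentiableAt

lemma lieBracket_mem_span_symmetryGenerators (α : ℝ) :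
    ∀ V ∈ symmetryGenerators α, ∀ W ∈ symmetryGenerators α,
      lieBracket V W ∈ span ℝ (symmetryGenerators α) := by
  unfold symmetryGenerators
  simp only [Set.mem_insert_iff, Set.mem_singleton_iff]
  rintro V (rfl | rfl | rfl | rfl | rfl | rfl | rfl) W (rfl | rfl | rfl | rfl | rfl | rfl | rfl) <;>
  -- the table lists each unordered pair in one order only; the other follows by antisymmetry
  first
  | (simp (maxDischargeDepth := 4) [mem_span_of_mem, add_mem, sub_mem, smul_mem])
  | (rw [lieBracket_swap, neg_mem_iff]
     simp (maxDischargeDepth := 4) [mem_span_of_mem, add_mem, sub_mem, smul_mem])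

theorem symmetry_algebra_brackets (α : ℝ) :
    lieBracket X1 X3 = X2 ∧
    lieBracket X2 X3 = -X1 ∧
    lieBracket X1 X5 = X1 ∧
    lieBracket X2 X5 = X2 ∧
    lieBracket X4 (X6 α) = Real.sin α • X6 α + Real.cos α • X7 α ∧
    lieBracket X4 (X7 α) = Real.sin α • X7 α - Real.cos α • X6 α ∧
    lieBracket X5 (X6 α) = -X6 α ∧
    lieBracket X5 (X7 α) = -X7 α ∧
    lieBracket X1 X2 = 0 ∧
    lieBracket X1 X4 = 0 ∧
    lieBracket X1 (X6 α) = 0 ∧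
    lieBracket X1 (X7 α) = 0 ∧
    lieBracket X2 X4 = 0 ∧
    lieBracket X2 (X6 α) = 0 ∧
    lieBracket X2 (X7 α) = 0 ∧
    lieBracket X3 X4 = 0 ∧
    lieBracket X3 X5 = 0 ∧
    lieBracket X3 (X6 α) = 0 ∧
    lieBracket X3 (X7 α) = 0 ∧
    lieBracket X4 X5 = 0 ∧
    lieBracket (X6 α) (X7 α) = 0 ∧
    (∀ X Y : R4 → R4,
      X ∈ Submodule.span ℝ ({X1, X2, X3, X4, X5, X6 α, X7 α} : Set (R4 → R4)) →
      Y ∈ Submodule.span ℝ ({X1, X2, X3, X4, X5, X6 α, X7 α} : Set (R4 → R4)) →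
      lieBracket X Y ∈ Submodule.span ℝ ({X1, X2, X3, X4, X5, X6 α, X7 α} : Set (R4 → R4))) := by
  refine ⟨lieBracket_X1_X3, lieBracket_X2_X3, lieBracket_X1_X5, lieBracket_X2_X5,
    lieBracket_X4_X6 α, lieBracket_X4_X7 α, lieBracket_X5_X6 α, lieBracket_X5_X7 α,
    lieBracket_X1_X2, lieBracket_X1_X4, lieBracket_X1_X6 α, lieBracket_X1_X7 α,
    lieBracket_X2_X4, lieBracket_X2_X6 α, lieBracket_X2_X7 α, lieBracket_X3_X4,
    lieBracket_X3_X5, lieBracket_X3_X6 α, lieBracket_X3_X7 α, lieBracket_X4_X5,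
    lieBracket_X6_X7 α, fun X Y hX hY => ?_⟩
  exact VectorField.lieBracket_mem_span (differentiable_of_mem_symmetryGenerators α)
    (lieBracket_mem_span_symmetryGenerators α) hX hY
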